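/- Let p̄ be a unit-norm vector and p = R p̄ for a positive constant R. Suppose p̄ is a locally optimal direction with constant μ > 0 independent of R, and suppose there exists a constant τ1 > 0 (possibly depending on p̄, η0, n, T, d but not on R) such that for every sequence X: p̄·(E_s − E_{s'}) ≥ τ1 for all s ∈ S_X(p), s' ∈ S²_X(p), and p̄·(E_s − E_{s'}) ≥ τ1 for all s ∈ S²_X(p), s' ∈ S^<_X(p). Then, for any ε > 0 and any p̂ with p̂ ≈ p, ||p̂||_2 independent of R, and p̂·(E_s − E_{s'}) ≥ τ2 > 0 for all s ∈ S_X(p̂), s' ∈ X \ S_X(p̂) and all X, there exists R large enough such that −p̂·∇_p L(E^1, p) ≤ (1 + ε) A and −p̂·∇_p L(E^1, p) ≥ (1 − ε) A, where A = (1/n) Σ_{(X,y) ∈ D} Σ_{i ∈ S_X(p)} Σ_{j ∈ S²_X(p)} (â_i(X) − â_j(X)) h_{i,j}(X, y, p), with â_i(X) = p̂·E_{x_i} and h_{i,j}(X, y, p) = g(X, y) q_i(X) q_j(X) (γ_i(X, y) − γ_j(X, y)). -/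

import Mathlib

open MeasureTheory ProbabilityTheory Filter Topology
open scoped BigOperators ENNReal NNReal Classical

noncomputable section

/-- `ℝ^d` with the Euclidean inner product. -/
abbrev Vec (d : ℕ) := EuclideanSpace ℝ (Fin d)

variable {S : Type*}

/-- The Euclidean (real) inner product on `ℝ^d`. -/
def iprod {d : ℕ} (x y : Vec d) : ℝ := inner ℝ x y

/-- Output of the one-layer softmax attention model
`f(X; p, E) = (Σ_i exp(p·E_{x_i}) E_{x_i}·v) / (Σ_j exp(p·E_{x_j}))`. -/
def fAttn {d T : ℕ} (Emb : S → Vec d) (v p : Vec d) (X : Fin T → S) : ℝ :=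
  (∑ i, Real.exp ((iprod (p) (Emb (X i)))) * (iprod (Emb (X i)) (v))) /
    ∑ j, Real.exp ((iprod (p) (Emb (X j))))

/-- Empirical logistic loss `L(E, p)`. -/
def lossL {d T n : ℕ} (X : Fin n → Fin T → S) (y : Fin n → ℝ)
    (Emb : S → Vec d) (v p : Vec d) : ℝ :=
  (1 / n : ℝ) * ∑ k, Real.log (1 + Real.exp (- y k * fAttn Emb v p (X k)))

/-- Average signed frequency `α_s` of a token `s`. -/
def alphaFreq {T n : ℕ} (X : Fin n → Fin T → S) (y : Fin n → ℝ) (s : S) : ℝ :=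
  (1 / (n * T) : ℝ) * ∑ k, y k * ∑ i, (if X k i = s then (1 : ℝ) else 0)

/-- Softmax weight `q_i(X)`. -/
def qw {d T : ℕ} (Emb : S → Vec d) (p : Vec d) (X : Fin T → S) (i : Fin T) : ℝ :=
  Real.exp ((iprod (p) (Emb (X i)))) / ∑ j, Real.exp ((iprod (p) (Emb (X j))))

/-- `g(X, y) = 1 / (1 + exp(y f(X; p, E)))`. -/
def gfun {d T : ℕ} (Emb : S → Vec d) (v p : Vec d) (X : Fin T → S) (yv : ℝ) : ℝ :=
  1 / (1 + Real.exp (yv * fAttn Emb v p X))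

/-- Partial gradient `∇_{E_s} L(E, p)` of the loss with respect to the embedding of token `s`. -/
def gradE {d T n : ℕ} (X : Fin n → Fin T → S) (y : Fin n → ℝ)
    (Emb : S → Vec d) (v p : Vec d) (s : S) : Vec d :=
  gradient (fun u => lossL X y (Function.update Emb s u) v p) (Emb s)

/-- Gradient `∇_p L(E, p)` of the loss with respect to the ⟨cls⟩ embedding `p`. -/
def gradP {d T n : ℕ} (X : Fin n → Fin T → S) (y : Fin n → ℝ)
    (Emb : S → Vec d) (v p : Vec d) : Vec d :=
  gradient (fun u => lossL X y Emb v u) p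

/-- The Gaussian `N(0, (1/d) I_d)` on `ℝ^d`. -/
def stdGaussianVec (d : ℕ) : Measure (Vec d) :=
  (Measure.pi fun _ : Fin d => gaussianReal 0 (1 / d : ℝ≥0)).map
    (MeasurableEquiv.toLp 2 (Fin d → ℝ))

/-- i.i.d. `N(0, (1/d) I_d)` initialization of all the token embeddings `E_s^0` (`s ∈ S`)
and of the ⟨cls⟩ embedding `p^0`. -/
def initMeasure (d : ℕ) (S : Type*) [Fintype S] : Measure ((S ⊕ Unit) → Vec d) :=
  Measure.pi fun _ => stdGaussianVec d

/-- Initial token embeddings `E^0`. -/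
def E0 {d : ℕ} (ω : (S ⊕ Unit) → Vec d) (s : S) : Vec d := ω (Sum.inl s)

/-- Initial ⟨cls⟩ embedding `p^0`. -/
def pInit {d : ℕ} (ω : (S ⊕ Unit) → Vec d) : Vec d := ω (Sum.inr ())

/-- Token embeddings `E^1` after one gradient-descent step with step size `η0`. -/
def E1 {d T n : ℕ} (X : Fin n → Fin T → S) (y : Fin n → ℝ) (v : Vec d) (η0 : ℝ)
    (ω : (S ⊕ Unit) → Vec d) (s : S) : Vec d :=
  E0 ω s - η0 • gradE X y (E0 ω) v (pInit ω) s

/-- The ⟨cls⟩ embedding `p^1` after one gradient-descent step with step size `η0`. -/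
def p1 {d T n : ℕ} (X : Fin n → Fin T → S) (y : Fin n → ℝ) (v : Vec d) (η0 : ℝ)
    (ω : (S ⊕ Unit) → Vec d) : Vec d :=
  pInit ω - η0 • gradP X y (E0 ω) v (pInit ω)

/-- Selected-token set `S_X(p) = {s ∈ X : p·E_s = max_{s' ∈ X} p·E_{s'}}`. -/
def selSet {d T : ℕ} (Emb : S → Vec d) (p : Vec d) (X : Fin T → S) : Set S :=
  {s | s ∈ Set.range X ∧ ∀ i, (iprod (p) (Emb (X i))) ≤ (iprod (p) (Emb s))}

/-- Secondary selection set `S²_X(p)`. -/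
def sel2Set {d T : ℕ} (Emb : S → Vec d) (p : Vec d) (X : Fin T → S) : Set S :=
  {s | s ∈ Set.range X ∧ s ∉ selSet Emb p X ∧
    ∀ s' ∈ Set.range X, s' ∉ selSet Emb p X → (iprod (p) (Emb s')) ≤ (iprod (p) (Emb s))}

/-- Tokens of `X` selected neither in first nor in second place: `S^<_X(p)`. -/
def selLtSet {d T : ℕ} (Emb : S → Vec d) (p : Vec d) (X : Fin T → S) : Set S :=
  Set.range X \ (selSet Emb p X ∪ sel2Set Emb p X)

/-- Feasibility for the max-margin problem associated with `p₀`: `p` lies in the equivalence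
class of `p₀` (same selection in every sequence) and separates, with margin 1, the selected
tokens from the non-selected tokens of every sequence. -/
def MMFeasible {d T n : ℕ} (Emb : S → Vec d) (X : Fin n → Fin T → S) (p₀ p : Vec d) : Prop :=
  (∀ k, selSet Emb p (X k) = selSet Emb p₀ (X k)) ∧
  ∀ k, ∀ s ∈ selSet Emb p₀ (X k), ∀ s' ∈ Set.range (X k),
    s' ∉ selSet Emb p₀ (X k) → 1 ≤ (iprod (p) (Emb s - Emb s'))

/-- `phat` solves the max-margin problem associated with `p₀`. -/
def MaxMarginSol {d T n : ℕ} (Emb : S → Vec d) (X : Fin n → Fin T → S)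
    (p₀ phat : Vec d) : Prop :=
  MMFeasible Emb X p₀ phat ∧ ∀ q : Vec d, MMFeasible Emb X p₀ q → ‖phat‖ ≤ ‖q‖

/-- A token is completely positive if it appears in the dataset and only in sequences with
label `+1`. -/
def ComplPos {T n : ℕ} (X : Fin n → Fin T → S) (y : Fin n → ℝ) (s : S) : Prop :=
  (∃ k i, X k i = s) ∧ ∀ k, (∃ i, X k i = s) → y k = 1

/-- A token is completely negative if it appears in the dataset and only in sequences with
label `-1`. -/
def ComplNeg {T n : ℕ} (X : Fin n → Fin T → S) (y : Fin n → ℝ) (s : S) : Prop :=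
  (∃ k i, X k i = s) ∧ ∀ k, (∃ i, X k i = s) → y k = -1

/-- Assumption A: every sequence `X_k` contains a single completely positive token or a single
completely negative token, denoted `sstar k`, and all its remaining tokens are irrelevant. -/
def AssumptionA {T n : ℕ} (X : Fin n → Fin T → S) (y : Fin n → ℝ) (sstar : Fin n → S) : Prop :=
  ∀ k, (ComplPos X y (sstar k) ∨ ComplNeg X y (sstar k)) ∧
    (∃! i, X k i = sstar k) ∧
    ∀ i, X k i ≠ sstar k → alphaFreq X y (X k i) = 0

/-- `ptraj` is a gradient-flow trajectory for `p ↦ L(Emb, p)`. -/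
def GradFlow {d T n : ℕ} (X : Fin n → Fin T → S) (y : Fin n → ℝ)
    (Emb : S → Vec d) (v : Vec d) (ptraj : ℝ → Vec d) : Prop :=
  ∀ t : ℝ, HasDerivAt ptraj (-(gradP X y Emb v (ptraj t))) t

/-- The quantity
`A = (1/n) Σ_{(X,y)} Σ_{i ∈ S_X(p)} Σ_{j ∈ S²_X(p)} (â_i(X) - â_j(X)) h_{i,j}(X, y, p)`,
where `â_i(X) = phat·E_{x_i}` and `h_{i,j}(X,y,p) = g(X,y) q_i(X) q_j(X) (γ_i - γ_j)`. -/
def domTerm {S : Type*} {d T n : ℕ} (Emb : S → Vec d) (v : Vec d)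
    (X : Fin n → Fin T → S) (y : Fin n → ℝ) (p phat : Vec d) : ℝ :=
  (1 / n : ℝ) * ∑ k,
    ∑ i ∈ Finset.univ.filter (fun i => X k i ∈ selSet Emb p (X k)),
      ∑ j ∈ Finset.univ.filter (fun j => X k j ∈ sel2Set Emb p (X k)),
        ((iprod (phat) (Emb (X k i))) - (iprod (phat) (Emb (X k j)))) *
          (gfun Emb v p (X k) (y k) * qw Emb p (X k) i * qw Emb p (X k) j *
            (y k * (iprod (Emb (X k i)) (v)) - y k * (iprod (Emb (X k j)) (v))))

/-! Along the line `p + t • phat` the softmax average `f` has derivative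
`∑ i, ∑ j, q i * q j * â i * (γ i - γ j)`, a covariance under the softmax weights, so
`-phat·∇_p L` is the `g`-weighted mean of these covariances over the dataset. For `p = R • pbar`,
pairs inside `S_X` contribute nothing because `â` is constant there, and every other pair not
joining `S_X` to `S²_X` carries weight `q i * q j ≤ exp (-R τ1) * m`, where `m` is the total
weight of `S²_X`. The pairs between `S_X` and `S²_X` are exactly `A`, which is at least
`τ2 μ m / T` by local optimality and the margin of `phat`; hence the rest is an `ε`-fraction
of `A` once `exp (-R τ1)` is small. -/

section PairSums

variable {ι : Type*}

theorem sum_sum_pairs_eq_zero_of_const (s : Finset ι) (q a γ : ι → ℝ)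
    (ha : ∀ i ∈ s, ∀ j ∈ s, a i = a j) :
    ∑ i ∈ s, ∑ j ∈ s, q i * q j * a i * (γ i - γ j) = 0 := by
  have h : ∀ i ∈ s, ∀ j ∈ s,
      q i * q j * a i * (γ i - γ j) = q i * q j * a i * γ i - q j * q i * a j * γ j := by
    intro i hi j hj
    rw [ha j hj i hi]
    ring
  rw [Finset.sum_congr rfl fun i hi => Finset.sum_congr rfl fun j hj => h i hi j hj]
  simp only [Finset.sum_sub_distrib]
  exact sub_eq_zero.mpr Finset.sum_comm

theorem mul_sum_le_sum_dominant (q a γ : ι → ℝ) (Sel Sel2 : Finset ι) {i₀ : ι}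
    (hq : ∀ i ∈ Sel, q i = q i₀) (ha : ∀ i ∈ Sel, a i = a i₀) (hq0 : ∀ i, 0 ≤ q i)
    {τ μ : ℝ} (hτ : 0 ≤ τ) (hμ : 0 ≤ μ)
    (hgap : ∀ j ∈ Sel2, τ ≤ a i₀ - a j) (hloc : ∀ j ∈ Sel2, μ ≤ ∑ i ∈ Sel, (γ i - γ j)) :
    τ * μ * q i₀ * ∑ j ∈ Sel2, q j ≤
      ∑ i ∈ Sel, ∑ j ∈ Sel2, (a i - a j) * (q i * q j * (γ i - γ j)) := by
  rw [Finset.sum_comm, Finset.mul_sum]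
  refine Finset.sum_le_sum fun j hj => ?_
  have hfactor : ∑ i ∈ Sel, (a i - a j) * (q i * q j * (γ i - γ j)) =
      (a i₀ - a j) * q i₀ * q j * ∑ i ∈ Sel, (γ i - γ j) := by
    rw [Finset.mul_sum]
    exact Finset.sum_congr rfl fun i hi => by rw [hq i hi, ha i hi]; ring
  rw [hfactor]
  have hq₀ := hq0 i₀
  have hqj := hq0 j
  calc τ * μ * q i₀ * q j = τ * q i₀ * q j * μ := by ring
    _ ≤ (a i₀ - a j) * q i₀ * q j * ∑ i ∈ Sel, (γ i - γ j) := by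
        gcongr
        · exact mul_nonneg (mul_nonneg (hτ.trans (hgap j hj)) hq₀) hqj
        · exact hgap j hj
        · exact hloc j hj

variable [DecidableEq ι]

theorem sum_dominant_pairs_eq (q a γ : ι → ℝ) {Sel Sel2 : Finset ι}
    (hdisj : Disjoint Sel Sel2) (ha : ∀ i ∈ Sel, ∀ j ∈ Sel, a i = a j) :
    ∑ p ∈ Sel ×ˢ Sel ∪ (Sel ×ˢ Sel2 ∪ Sel2 ×ˢ Sel), q p.1 * q p.2 * a p.1 * (γ p.1 - γ p.2) =
      ∑ i ∈ Sel, ∑ j ∈ Sel2, (a i - a j) * (q i * q j * (γ i - γ j)) := by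
  have hd1 : Disjoint (Sel ×ˢ Sel) (Sel ×ˢ Sel2 ∪ Sel2 ×ˢ Sel) :=
    Finset.disjoint_union_right.mpr
      ⟨Finset.disjoint_product.mpr (Or.inr hdisj), Finset.disjoint_product.mpr (Or.inl hdisj)⟩
  have hd2 : Disjoint (Sel ×ˢ Sel2) (Sel2 ×ˢ Sel) := Finset.disjoint_product.mpr (Or.inl hdisj)
  rw [Finset.sum_union hd1, Finset.sum_union hd2, Finset.sum_product, Finset.sum_product,
    Finset.sum_product, sum_sum_pairs_eq_zero_of_const Sel q a γ ha, zero_add,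
    Finset.sum_comm (s := Sel2), ← Finset.sum_add_distrib]
  refine Finset.sum_congr rfl fun i _ => ?_
  rw [← Finset.sum_add_distrib]
  exact Finset.sum_congr rfl fun j _ => by ring

variable [Fintype ι]

theorem abs_sum_pairs_sub_dominant_le (q a γ : ι → ℝ) {Sel Sel2 : Finset ι}
    (hdisj : Disjoint Sel Sel2) (ha : ∀ i ∈ Sel, ∀ j ∈ Sel, a i = a j) {δ : ℝ} (hδ : 0 ≤ δ)
    (hbad : ∀ i j, (i, j) ∉ Sel ×ˢ Sel ∪ (Sel ×ˢ Sel2 ∪ Sel2 ×ˢ Sel) → |q i * q j| ≤ δ) :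
    |∑ i, ∑ j, q i * q j * a i * (γ i - γ j) -
        ∑ i ∈ Sel, ∑ j ∈ Sel2, (a i - a j) * (q i * q j * (γ i - γ j))| ≤
      δ * ∑ i, ∑ j, |a i * (γ i - γ j)| := by
  set G := Sel ×ˢ Sel ∪ (Sel ×ˢ Sel2 ∪ Sel2 ×ˢ Sel)
  set t : ι × ι → ℝ := fun p => q p.1 * q p.2 * a p.1 * (γ p.1 - γ p.2)
  have hsplit :
      ∑ i, ∑ j, q i * q j * a i * (γ i - γ j) = ∑ p ∈ G, t p + ∑ p ∈ Finset.univ \ G, t p := by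
    rw [add_comm, Finset.sum_sdiff (Finset.subset_univ G), ← Finset.univ_product_univ,
      Finset.sum_product]
  rw [hsplit, sum_dominant_pairs_eq q a γ hdisj ha, add_sub_cancel_left]
  calc |∑ p ∈ Finset.univ \ G, t p|
      ≤ ∑ p ∈ Finset.univ \ G, |t p| := Finset.abs_sum_le_sum_abs _ _
    _ ≤ ∑ p ∈ Finset.univ \ G, δ * |a p.1 * (γ p.1 - γ p.2)| := by
        refine Finset.sum_le_sum fun p hp => ?_
        calc |t p| = |q p.1 * q p.2| * |a p.1 * (γ p.1 - γ p.2)| := by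
              rw [← abs_mul]; simp only [t]; ring_nf
          _ ≤ δ * |a p.1 * (γ p.1 - γ p.2)| :=
              mul_le_mul_of_nonneg_right (hbad _ _ (Finset.mem_sdiff.mp hp).2) (abs_nonneg _)
    _ ≤ ∑ p : ι × ι, δ * |a p.1 * (γ p.1 - γ p.2)| :=
        Finset.sum_le_sum_of_subset_of_nonneg (Finset.subset_univ _)
          fun _ _ _ => by positivity
    _ = δ * ∑ i, ∑ j, |a i * (γ i - γ j)| := by
        rw [← Finset.mul_sum, ← Finset.univ_product_univ, Finset.sum_product]

end PairSums

section LineDerivative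

attribute [local fun_prop] DifferentiableAt.inner

variable {d T : ℕ}

theorem hasDerivAt_exp_iprod_line (p u e : Vec d) :
    HasDerivAt (fun t : ℝ => Real.exp (iprod (p + t • u) e))
      (Real.exp (iprod p e) * iprod u e) 0 := by
  have h := (((hasDerivAt_id (0 : ℝ)).mul_const (iprod u e)).const_add (iprod p e)).exp
  simp only [id, zero_mul, add_zero, one_mul] at h
  refine h.congr_of_eventuallyEq (Filter.Eventually.of_forall fun t => ?_)
  simp only [iprod, inner_add_left, real_inner_smul_left]

theorem hasDerivAt_fAttn_line [NeZero T] (Emb : S → Vec d) (v p u : Vec d) (Z : Fin T → S) :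
    HasDerivAt (fun t : ℝ => fAttn Emb v (p + t • u) Z)
      (∑ i, ∑ j, qw Emb p Z i * qw Emb p Z j * iprod u (Emb (Z i)) *
        (iprod (Emb (Z i)) v - iprod (Emb (Z j)) v)) 0 := by
  have hD : 0 < ∑ i, Real.exp (iprod p (Emb (Z i))) := by positivity
  have h := (HasDerivAt.fun_sum (u := Finset.univ) fun i _ =>
      (hasDerivAt_exp_iprod_line p u (Emb (Z i))).mul_const (iprod (Emb (Z i)) v)).div
    (HasDerivAt.fun_sum (u := Finset.univ) fun i _ => hasDerivAt_exp_iprod_line p u (Emb (Z i)))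
    (by simpa only [zero_smul, add_zero] using hD.ne')
  simp only [zero_smul, add_zero] at h
  refine h.congr_deriv ?_
  simp only [qw]
  rw [mul_comm (∑ i, Real.exp (iprod p (Emb (Z i))) * iprod (Emb (Z i)) v), Finset.sum_mul_sum,
    Finset.sum_mul_sum, ← Finset.sum_sub_distrib, Finset.sum_div]
  refine Finset.sum_congr rfl fun i _ => ?_
  rw [← Finset.sum_sub_distrib, Finset.sum_div]
  refine Finset.sum_congr rfl fun j _ => ?_
  field_simp

theorem hasDerivAt_lossL_line [NeZero T] {n : ℕ} (X : Fin n → Fin T → S) (y : Fin n → ℝ)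
    (Emb : S → Vec d) (v p u : Vec d) :
    HasDerivAt (fun t : ℝ => lossL X y Emb v (p + t • u))
      (-((1 / n : ℝ) * ∑ k, gfun Emb v p (X k) (y k) *
        ∑ i, ∑ j, qw Emb p (X k) i * qw Emb p (X k) j * iprod u (Emb (X k i)) *
          (y k * iprod (Emb (X k i)) v - y k * iprod (Emb (X k j)) v))) 0 := by
  have hk : ∀ k, HasDerivAt
      (fun t : ℝ => Real.log (1 + Real.exp (-y k * fAttn Emb v (p + t • u) (X k))))
      (-(gfun Emb v p (X k) (y k) *
        ∑ i, ∑ j, qw Emb p (X k) i * qw Emb p (X k) j * iprod u (Emb (X k i)) *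
          (y k * iprod (Emb (X k i)) v - y k * iprod (Emb (X k j)) v))) 0 := by
    intro k
    have h := ((((hasDerivAt_fAttn_line Emb v p u (X k)).const_mul (-y k)).exp).const_add 1).log
      (by positivity)
    simp only [zero_smul, add_zero] at h
    refine h.congr_deriv ?_
    have hg : Real.exp (-y k * fAttn Emb v p (X k)) / (1 + Real.exp (-y k * fAttn Emb v p (X k)))
        = gfun Emb v p (X k) (y k) := by
      rw [gfun, neg_mul, Real.exp_neg]
      field_simp
      ring
    have hy : ∑ i, ∑ j, qw Emb p (X k) i * qw Emb p (X k) j * iprod u (Emb (X k i)) *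
          (y k * iprod (Emb (X k i)) v - y k * iprod (Emb (X k j)) v) =
        y k * ∑ i, ∑ j, qw Emb p (X k) i * qw Emb p (X k) j * iprod u (Emb (X k i)) *
          (iprod (Emb (X k i)) v - iprod (Emb (X k j)) v) := by
      simp only [Finset.mul_sum]
      exact Finset.sum_congr rfl fun i _ => Finset.sum_congr rfl fun j _ => by ring
    rw [hy, ← hg]
    ring
  refine ((HasDerivAt.fun_sum (u := Finset.univ) fun k _ => hk k).const_mul (1 / n : ℝ)).congr_deriv
    ?_
  rw [Finset.sum_neg_distrib, mul_neg]

theorem neg_iprod_gradP_eq [NeZero T] {n : ℕ} (X : Fin n → Fin T → S) (y : Fin n → ℝ)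
    (Emb : S → Vec d) (v p u : Vec d) :
    -iprod u (gradP X y Emb v p) =
      (1 / n : ℝ) * ∑ k, gfun Emb v p (X k) (y k) *
        ∑ i, ∑ j, qw Emb p (X k) i * qw Emb p (X k) j * iprod u (Emb (X k i)) *
          (y k * iprod (Emb (X k i)) v - y k * iprod (Emb (X k j)) v) := by
  have hdiff : DifferentiableAt ℝ (fun w => lossL X y Emb v w) p := by
    unfold lossL fAttn iprod
    fun_prop (disch := positivity)
  rw [gradP, iprod, inner_gradient_right, conj_trivial, ← hdiff.lineDeriv_eq_fderiv,
    HasLineDerivAt.lineDeriv (hasDerivAt_lossL_line X y Emb v p u), neg_neg]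

end LineDerivative

section Selection

variable {d T : ℕ}

theorem iprod_smul_left (R : ℝ) (x y : Vec d) : iprod (R • x) y = R * iprod x y :=
  real_inner_smul_left x y R

theorem iprod_sub_right (x y z : Vec d) : iprod x (y - z) = iprod x y - iprod x z :=
  inner_sub_right x y z

variable (Emb : S → Vec d) (Z : Fin T → S)

theorem selSet_smul {R : ℝ} (hR : 0 < R) (p : Vec d) :
    selSet Emb (R • p) Z = selSet Emb p Z := by
  ext s
  simp only [selSet, Set.mem_ofPred_eq, iprod_smul_left, mul_le_mul_iff_right₀ hR]

theorem sel2Set_smul {R : ℝ} (hR : 0 < R) (p : Vec d) :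
    sel2Set Emb (R • p) Z = sel2Set Emb p Z := by
  ext s
  simp only [sel2Set, Set.mem_ofPred_eq, selSet_smul Emb Z hR, iprod_smul_left,
    mul_le_mul_iff_right₀ hR]

variable {Emb Z}

theorem iprod_eq_of_mem_selSet {p : Vec d} {s s' : S} (hs : s ∈ selSet Emb p Z)
    (hs' : s' ∈ selSet Emb p Z) : iprod p (Emb s) = iprod p (Emb s') := by
  obtain ⟨⟨i, rfl⟩, hi⟩ := hs
  obtain ⟨⟨j, rfl⟩, hj⟩ := hs'
  exact le_antisymm (hj i) (hi j)

theorem exists_mem_selSet [NeZero T] (p : Vec d) : ∃ i, Z i ∈ selSet Emb p Z := by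
  obtain ⟨i, -, hi⟩ := Finset.exists_max_image Finset.univ
    (fun i => iprod p (Emb (Z i))) Finset.univ_nonempty
  exact ⟨i, ⟨i, rfl⟩, fun j => hi j (Finset.mem_univ j)⟩

theorem exists_mem_sel2Set {p : Vec d} {i : Fin T} (hi : Z i ∉ selSet Emb p Z) :
    ∃ j, Z j ∈ sel2Set Emb p Z := by
  obtain ⟨j, hj, hmax⟩ := Finset.exists_max_image
    (Finset.univ.filter fun j => Z j ∉ selSet Emb p Z) (fun j => iprod p (Emb (Z j)))
    ⟨i, Finset.mem_filter.mpr ⟨Finset.mem_univ i, hi⟩⟩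
  refine ⟨j, ⟨j, rfl⟩, (Finset.mem_filter.mp hj).2, ?_⟩
  rintro _ ⟨k, rfl⟩ hk
  exact hmax k (Finset.mem_filter.mpr ⟨Finset.mem_univ k, hk⟩)

theorem qw_nonneg (p : Vec d) (i : Fin T) : 0 ≤ qw Emb p Z i := by
  unfold qw
  positivity

theorem qw_le_one [NeZero T] (p : Vec d) (i : Fin T) : qw Emb p Z i ≤ 1 := by
  rw [qw, div_le_one (by positivity)]
  exact Finset.single_le_sum (f := fun j => Real.exp (iprod p (Emb (Z j))))
    (fun j _ => (Real.exp_pos _).le) (Finset.mem_univ i)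

theorem qw_eq_of_iprod_eq {p : Vec d} {i j : Fin T}
    (h : iprod p (Emb (Z i)) = iprod p (Emb (Z j))) : qw Emb p Z i = qw Emb p Z j := by
  rw [qw, qw, h]

theorem inv_card_le_qw [NeZero T] {p : Vec d} {i : Fin T} (hi : Z i ∈ selSet Emb p Z) :
    (T : ℝ)⁻¹ ≤ qw Emb p Z i := by
  have hsum : ∑ j, Real.exp (iprod p (Emb (Z j))) ≤ T * Real.exp (iprod p (Emb (Z i))) := by
    simpa using Finset.sum_le_card_nsmul Finset.univ _ _
      fun j _ => Real.exp_le_exp.mpr (hi.2 j)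
  rw [qw, le_div_iff₀ (by positivity), inv_mul_le_iff₀ (Nat.cast_pos.mpr (NeZero.pos T))]
  exact hsum

theorem qw_smul_le_mul_exp {p : Vec d} {R τ : ℝ} (hR : 0 ≤ R) {i j : Fin T}
    (h : τ ≤ iprod p (Emb (Z j) - Emb (Z i))) :
    qw Emb (R • p) Z i ≤ qw Emb (R • p) Z j * Real.exp (-(R * τ)) := by
  rw [qw, qw, div_mul_eq_mul_div, ← Real.exp_add]
  gcongr
  rw [iprod_smul_left, iprod_smul_left]
  rw [iprod_sub_right] at h
  nlinarith

end Selection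

section Sequence

variable {d T : ℕ} [NeZero T] {Emb : S → Vec d} {v pbar phat : Vec d} {Z : Fin T → S}
  {yk μ τ₁ τ₂ ε R : ℝ}

theorem abs_qw_mul_qw_le_of_not_mem_dominant (hR : 0 ≤ R)
    (hsep1 : ∀ s ∈ selSet Emb pbar Z, ∀ s' ∈ sel2Set Emb pbar Z,
      τ₁ ≤ iprod pbar (Emb s - Emb s'))
    (hsep2 : ∀ s ∈ sel2Set Emb pbar Z, ∀ s' ∈ selLtSet Emb pbar Z,
      τ₁ ≤ iprod pbar (Emb s - Emb s'))
    {i j : Fin T} (hij : (i, j) ∉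
      (Finset.univ.filter fun i => Z i ∈ selSet Emb pbar Z) ×ˢ
          (Finset.univ.filter fun i => Z i ∈ selSet Emb pbar Z) ∪
        ((Finset.univ.filter fun i => Z i ∈ selSet Emb pbar Z) ×ˢ
            (Finset.univ.filter fun j => Z j ∈ sel2Set Emb pbar Z) ∪
          (Finset.univ.filter fun j => Z j ∈ sel2Set Emb pbar Z) ×ˢ
            (Finset.univ.filter fun i => Z i ∈ selSet Emb pbar Z))) :
    |qw Emb (R • pbar) Z i * qw Emb (R • pbar) Z j| ≤
      Real.exp (-(R * τ₁)) *
        ∑ j ∈ Finset.univ.filter (fun j => Z j ∈ sel2Set Emb pbar Z), qw Emb (R • pbar) Z j := by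
  set q := qw Emb (R • pbar) Z
  set m := ∑ j ∈ Finset.univ.filter (fun j => Z j ∈ sel2Set Emb pbar Z), q j
  set e := Real.exp (-(R * τ₁))
  have hq0 : ∀ i, 0 ≤ q i := qw_nonneg (R • pbar)
  have he : 0 ≤ e := (Real.exp_pos _).le
  have hle_m : ∀ j, Z j ∈ sel2Set Emb pbar Z → q j ≤ m := fun j hj =>
    Finset.single_le_sum (fun j _ => hq0 j) (Finset.mem_filter.mpr ⟨Finset.mem_univ _, hj⟩)
  obtain ⟨i₀, hi₀⟩ := exists_mem_selSet (Emb := Emb) (Z := Z) pbar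
  have hsel2 : ∀ j, Z j ∈ sel2Set Emb pbar Z → q j ≤ e := fun j hj =>
    (qw_smul_le_mul_exp hR (hsep1 _ hi₀ _ hj)).trans (mul_le_of_le_one_left he (qw_le_one _ _))
  have hlow : ∀ i j, Z i ∉ selSet Emb pbar Z → Z i ∉ sel2Set Emb pbar Z → q i * q j ≤ e * m := by
    intro i j hi1 hi2
    obtain ⟨j₀, hj₀⟩ := exists_mem_sel2Set hi1
    have hlt : Z i ∈ selLtSet Emb pbar Z := ⟨⟨i, rfl⟩, fun h => h.elim hi1 hi2⟩
    calc q i * q j ≤ (m * e) * 1 :=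
          mul_le_mul ((qw_smul_le_mul_exp hR (hsep2 _ hj₀ _ hlt)).trans
            (mul_le_mul_of_nonneg_right (hle_m j₀ hj₀) he))
            (qw_le_one _ _) (hq0 j) (mul_nonneg (Finset.sum_nonneg fun j _ => hq0 j) he)
      _ = e * m := by ring
  simp only [Finset.mem_union, Finset.mem_product, Finset.mem_filter, Finset.mem_univ,
    true_and, not_or, not_and] at hij
  rw [abs_of_nonneg (mul_nonneg (hq0 i) (hq0 j))]
  by_cases hi2 : Z i ∈ sel2Set Emb pbar Z
  · by_cases hj2 : Z j ∈ sel2Set Emb pbar Z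
    · exact mul_le_mul (hsel2 i hi2) (hle_m j hj2) (hq0 j) he
    · rw [mul_comm]; exact hlow j i (hij.2.2 hi2) hj2
  · by_cases hi1 : Z i ∈ selSet Emb pbar Z
    · rw [mul_comm]; exact hlow j i (hij.1 hi1) (hij.2.1 hi1)
    · exact hlow i j hi1 hi2

theorem abs_sum_pairs_sub_dominant_le_mul_of_exp_le
    (hμ : 0 < μ) (hτ₂ : 0 < τ₂) (hε : 0 ≤ ε) (hR : 0 < R)
    (hlocal : ∀ j : Fin T, Z j ∈ sel2Set Emb pbar Z →
      μ ≤ ∑ i ∈ Finset.univ.filter (fun i => Z i ∈ selSet Emb pbar Z),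
            (yk * iprod (Emb (Z i)) v - yk * iprod (Emb (Z j)) v))
    (hsep1 : ∀ s ∈ selSet Emb pbar Z, ∀ s' ∈ sel2Set Emb pbar Z,
      τ₁ ≤ iprod pbar (Emb s - Emb s'))
    (hsep2 : ∀ s ∈ sel2Set Emb pbar Z, ∀ s' ∈ selLtSet Emb pbar Z,
      τ₁ ≤ iprod pbar (Emb s - Emb s'))
    (hequiv : selSet Emb phat Z = selSet Emb pbar Z)
    (hsep3 : ∀ s ∈ selSet Emb phat Z, ∀ s' ∈ Set.range Z,
      s' ∉ selSet Emb phat Z → τ₂ ≤ iprod phat (Emb s - Emb s'))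
    (hsmall : Real.exp (-(R * τ₁)) * ∑ i, ∑ j,
        |iprod phat (Emb (Z i)) * (yk * iprod (Emb (Z i)) v - yk * iprod (Emb (Z j)) v)| ≤
      ε * (τ₂ * μ / T)) :
    |∑ i, ∑ j, qw Emb (R • pbar) Z i * qw Emb (R • pbar) Z j * iprod phat (Emb (Z i)) *
          (yk * iprod (Emb (Z i)) v - yk * iprod (Emb (Z j)) v) -
        ∑ i ∈ Finset.univ.filter (fun i => Z i ∈ selSet Emb pbar Z),
          ∑ j ∈ Finset.univ.filter (fun j => Z j ∈ sel2Set Emb pbar Z),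
            (iprod phat (Emb (Z i)) - iprod phat (Emb (Z j))) *
              (qw Emb (R • pbar) Z i * qw Emb (R • pbar) Z j *
                (yk * iprod (Emb (Z i)) v - yk * iprod (Emb (Z j)) v))| ≤
      ε * ∑ i ∈ Finset.univ.filter (fun i => Z i ∈ selSet Emb pbar Z),
          ∑ j ∈ Finset.univ.filter (fun j => Z j ∈ sel2Set Emb pbar Z),
            (iprod phat (Emb (Z i)) - iprod phat (Emb (Z j))) *
              (qw Emb (R • pbar) Z i * qw Emb (R • pbar) Z j *
                (yk * iprod (Emb (Z i)) v - yk * iprod (Emb (Z j)) v)) := by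
  set q := qw Emb (R • pbar) Z
  set Sel := Finset.univ.filter fun i => Z i ∈ selSet Emb pbar Z
  set Sel2 := Finset.univ.filter fun j => Z j ∈ sel2Set Emb pbar Z
  set m := ∑ j ∈ Sel2, q j
  set e := Real.exp (-(R * τ₁))
  set C := ∑ i, ∑ j,
    |iprod phat (Emb (Z i)) * (yk * iprod (Emb (Z i)) v - yk * iprod (Emb (Z j)) v)|
  have hphat : ∀ {i}, i ∈ Sel → Z i ∈ selSet Emb phat Z := fun hi => by
    rw [hequiv]; exact (Finset.mem_filter.mp hi).2
  obtain ⟨i₀, hi₀⟩ := exists_mem_selSet (Emb := Emb) (Z := Z) pbar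
  have hi₀' : i₀ ∈ Sel := Finset.mem_filter.mpr ⟨Finset.mem_univ _, hi₀⟩
  have hq0 : ∀ i, 0 ≤ q i := qw_nonneg (R • pbar)
  have hm : 0 ≤ m := Finset.sum_nonneg fun j _ => hq0 j
  have hupper := abs_sum_pairs_sub_dominant_le q (fun i => iprod phat (Emb (Z i)))
    (fun i => yk * iprod (Emb (Z i)) v) (Finset.disjoint_filter.mpr fun _ _ h h2 => h2.2.1 h)
    (fun i hi j hj => iprod_eq_of_mem_selSet (hphat hi) (hphat hj))
    (mul_nonneg (Real.exp_pos _).le hm)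
    fun i j hij => abs_qw_mul_qw_le_of_not_mem_dominant hR.le hsep1 hsep2 hij
  have hlower := mul_sum_le_sum_dominant q (fun i => iprod phat (Emb (Z i)))
    (fun i => yk * iprod (Emb (Z i)) v) Sel Sel2 (i₀ := i₀)
    (fun i hi => qw_eq_of_iprod_eq (by
      rw [iprod_smul_left, iprod_smul_left,
        iprod_eq_of_mem_selSet (Finset.mem_filter.mp hi).2 hi₀]))
    (fun i hi => iprod_eq_of_mem_selSet (hphat hi) (hphat hi₀')) hq0 hτ₂.le hμ.le
    (fun j hj => by
      have h := hsep3 _ (hphat hi₀') _ ⟨j, rfl⟩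
        (by rw [hequiv]; exact (Finset.mem_filter.mp hj).2.2.1)
      rwa [iprod_sub_right] at h)
    (fun j hj => hlocal j (Finset.mem_filter.mp hj).2)
  have hi₀R : Z i₀ ∈ selSet Emb (R • pbar) Z := by rw [selSet_smul Emb Z hR]; exact hi₀
  calc _ ≤ e * m * C := hupper
    _ = (e * C) * m := by ring
    _ ≤ ε * (τ₂ * μ / T) * m := by gcongr
    _ = ε * (τ₂ * μ * (T : ℝ)⁻¹ * m) := by ring
    _ ≤ ε * (τ₂ * μ * q i₀ * m) := by gcongr; exact inv_card_le_qw hi₀R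
    _ ≤ _ := mul_le_mul_of_nonneg_left hlower hε

end Sequence

theorem domTerm_smul_eq {d T n : ℕ} (Emb : S → Vec d) (v : Vec d) (X : Fin n → Fin T → S)
    (y : Fin n → ℝ) (pbar phat : Vec d) {R : ℝ} (hR : 0 < R) :
    domTerm Emb v X y (R • pbar) phat =
      (1 / n : ℝ) * ∑ k, gfun Emb v (R • pbar) (X k) (y k) *
        ∑ i ∈ Finset.univ.filter (fun i => X k i ∈ selSet Emb pbar (X k)),
          ∑ j ∈ Finset.univ.filter (fun j => X k j ∈ sel2Set Emb pbar (X k)),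
            (iprod phat (Emb (X k i)) - iprod phat (Emb (X k j))) *
              (qw Emb (R • pbar) (X k) i * qw Emb (R • pbar) (X k) j *
                (y k * iprod (Emb (X k i)) v - y k * iprod (Emb (X k j)) v)) := by
  simp only [domTerm, selSet_smul Emb _ hR, sel2Set_smul Emb _ hR]
  refine congrArg _ (Finset.sum_congr rfl fun k _ => ?_)
  simp only [Finset.mul_sum]
  exact Finset.sum_congr rfl fun i _ => Finset.sum_congr rfl fun j _ => by ring

theorem mul_sum_le_and_le_of_abs_sub_le {ι : Type*} (s : Finset ι) {c ε : ℝ} (hc : 0 ≤ c)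
    {g x a : ι → ℝ} (hg : ∀ k ∈ s, 0 ≤ g k) (h : ∀ k ∈ s, |x k - a k| ≤ ε * a k) :
    c * ∑ k ∈ s, g k * x k ≤ (1 + ε) * (c * ∑ k ∈ s, g k * a k) ∧
      (1 - ε) * (c * ∑ k ∈ s, g k * a k) ≤ c * ∑ k ∈ s, g k * x k := by
  have hk : ∀ k ∈ s, g k * x k ≤ (1 + ε) * (g k * a k) ∧ (1 - ε) * (g k * a k) ≤ g k * x k := by
    intro k hk
    obtain ⟨h1, h2⟩ := abs_le.mp (h k hk)
    constructor <;> nlinarith [hg k hk]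
  rw [Finset.mul_sum, Finset.mul_sum, Finset.mul_sum, Finset.mul_sum]
  constructor
  · refine Finset.sum_le_sum fun k hks => ?_
    nlinarith [(hk k hks).1]
  · refine Finset.sum_le_sum fun k hks => ?_
    nlinarith [(hk k hks).2]

theorem eventually_exp_neg_mul_mul_le {τ c : ℝ} (hτ : 0 < τ) (hc : 0 < c) (C : ℝ) :
    ∀ᶠ R in atTop, Real.exp (-(R * τ)) * C ≤ c := by
  have h : Tendsto (fun R => Real.exp (-(R * τ)) * C) atTop (𝓝 0) := by
    simpa using (Real.tendsto_exp_neg_atTop_nhds_zero.comp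
      (tendsto_id.atTop_mul_const hτ)).mul_const C
  exact (h.eventually_lt_const hc).mono fun _ => le_of_lt

theorem statement14_general {S : Type*} (d T n : ℕ) (hT : 0 < T)
    (X : Fin n → Fin T → S) (y : Fin n → ℝ)
    (Emb : S → Vec d) (v : Vec d)
    (pbar : Vec d)
    (μ : ℝ) (hμ : 0 < μ)
    (hlocal : ∀ k, ∀ j : Fin T, X k j ∈ sel2Set Emb pbar (X k) →
      μ ≤ ∑ i ∈ Finset.univ.filter (fun i => X k i ∈ selSet Emb pbar (X k)),
            (y k * (iprod (Emb (X k i)) (v)) - y k * (iprod (Emb (X k j)) (v))))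
    (τ1 : ℝ) (hτ1 : 0 < τ1)
    (hsep1 : ∀ k, ∀ s ∈ selSet Emb pbar (X k), ∀ s' ∈ sel2Set Emb pbar (X k),
      τ1 ≤ (iprod (pbar) (Emb s - Emb s')))
    (hsep2 : ∀ k, ∀ s ∈ sel2Set Emb pbar (X k), ∀ s' ∈ selLtSet Emb pbar (X k),
      τ1 ≤ (iprod (pbar) (Emb s - Emb s')))
    (ε : ℝ) (hε : 0 < ε)
    (phat : Vec d)
    (hequiv : ∀ k, selSet Emb phat (X k) = selSet Emb pbar (X k))
    (τ2 : ℝ) (hτ2 : 0 < τ2)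
    (hsep3 : ∀ k, ∀ s ∈ selSet Emb phat (X k), ∀ s' ∈ Set.range (X k),
      s' ∉ selSet Emb phat (X k) → τ2 ≤ (iprod (phat) (Emb s - Emb s'))) :
    ∃ R0 : ℝ, 0 < R0 ∧ ∀ R : ℝ, R0 ≤ R →
      -(iprod (phat) (gradP X y Emb v (R • pbar))) ≤
          (1 + ε) * domTerm Emb v X y (R • pbar) phat ∧
      (1 - ε) * domTerm Emb v X y (R • pbar) phat ≤
          -(iprod (phat) (gradP X y Emb v (R • pbar))) := by
  have : NeZero T := ⟨hT.ne'⟩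
  have hc : 0 < ε * (τ2 * μ / T) := by positivity
  obtain ⟨R₀, hR₀⟩ := Filter.eventually_atTop.mp ((Filter.eventually_gt_atTop 0).and
    (Filter.eventually_all.mpr fun k => eventually_exp_neg_mul_mul_le hτ1 hc (∑ i, ∑ j,
      |iprod phat (Emb (X k i)) * (y k * iprod (Emb (X k i)) v - y k * iprod (Emb (X k j)) v)|)))
  refine ⟨max R₀ 1, by positivity, fun R hR => ?_⟩
  obtain ⟨hR, hsmall⟩ := hR₀ R (le_of_max_le_left hR)
  rw [neg_iprod_gradP_eq, domTerm_smul_eq Emb v X y pbar phat hR]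
  exact mul_sum_le_and_le_of_abs_sub_le _ (by positivity)
    (fun k _ => by unfold gfun; positivity) fun k _ =>
      abs_sum_pairs_sub_dominant_le_mul_of_exp_le hμ hτ2 hε.le hR (hlocal k) (hsep1 k) (hsep2 k)
        (hequiv k) (hsep3 k) (hsmall k)

/-- gradient approximation: for a locally optimal unit direction `pbar` with
separation `τ1`, and any equivalent `phat` with margin `τ2`, for `R` large enough the
directional derivative `-phat·∇_p L(E^1, R pbar)` is within a `(1 ± ε)` factor of the
dominating term `A`. -/
theorem statement14 {S : Type*} (d T n : ℕ) (hd0 : 0 < d) (hT : 0 < T) (hn : 0 < n)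
    (X : Fin n → Fin T → S) (y : Fin n → ℝ) (hy : ∀ k, y k = 1 ∨ y k = -1)
    (Emb : S → Vec d) (v : Vec d) (hv : ‖v‖ = 1)
    (pbar : Vec d) (hpbar : ‖pbar‖ = 1)
    (μ : ℝ) (hμ : 0 < μ)
    (hlocal : ∀ k, ∀ j : Fin T, X k j ∈ sel2Set Emb pbar (X k) →
      μ ≤ ∑ i ∈ Finset.univ.filter (fun i => X k i ∈ selSet Emb pbar (X k)),
            (y k * (iprod (Emb (X k i)) (v)) - y k * (iprod (Emb (X k j)) (v))))
    (τ1 : ℝ) (hτ1 : 0 < τ1)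
    (hsep1 : ∀ k, ∀ s ∈ selSet Emb pbar (X k), ∀ s' ∈ sel2Set Emb pbar (X k),
      τ1 ≤ (iprod (pbar) (Emb s - Emb s')))
    (hsep2 : ∀ k, ∀ s ∈ sel2Set Emb pbar (X k), ∀ s' ∈ selLtSet Emb pbar (X k),
      τ1 ≤ (iprod (pbar) (Emb s - Emb s')))
    (ε : ℝ) (hε : 0 < ε)
    (phat : Vec d)
    (hequiv : ∀ k, selSet Emb phat (X k) = selSet Emb pbar (X k))
    (τ2 : ℝ) (hτ2 : 0 < τ2)
    (hsep3 : ∀ k, ∀ s ∈ selSet Emb phat (X k), ∀ s' ∈ Set.range (X k),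
      s' ∉ selSet Emb phat (X k) → τ2 ≤ (iprod (phat) (Emb s - Emb s'))) :
    ∃ R0 : ℝ, 0 < R0 ∧ ∀ R : ℝ, R0 ≤ R →
      -(iprod (phat) (gradP X y Emb v (R • pbar))) ≤
          (1 + ε) * domTerm Emb v X y (R • pbar) phat ∧
      (1 - ε) * domTerm Emb v X y (R • pbar) phat ≤
          -(iprod (phat) (gradP X y Emb v (R • pbar))) :=
  statement14_general d T n hT X y Emb v pbar μ hμ hlocal τ1 hτ1 hsep1 hsep2 ε hε phat hequiv τ2 hτ2
    hsep3
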